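/- For every n ≥ 1 and every finite set Y ⊆ Q with #Y = n, the quantization energy satisfies E(Y) ≥ (2π/5)·(3/(4π))^{5/3}·n^{−2/3}. -/

import Mathlib

open MeasureTheory

noncomputable section

/-- Euclidean 3-space. -/
abbrev E3 := EuclideanSpace ℝ (Fin 3)

/-- The closed unit cube Q = [0,1]³. -/
def Qcube : Set E3 := {x | ∀ i, x i ∈ Set.Icc (0 : ℝ) 1}

/-- The quantization energy E(Y) = ∫_Q dist(x,Y)² dx. -/
def quantE (Y : Finset E3) : ℝ := ∫ x in Qcube, (Metric.infDist x (↑Y : Set E3)) ^ 2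

/-- The Voronoi cell of a generator y ∈ Y, relative to Q. -/
def vorCell (Y : Finset E3) (y : E3) : Set E3 :=
  {x ∈ Qcube | ∀ z ∈ Y, dist x y ≤ dist x z}

/-- Y is a minimizer of the quantization energy among n-point subsets of Q. -/
def IsMinimizer (n : ℕ) (Y : Finset E3) : Prop :=
  (↑Y : Set E3) ⊆ Qcube ∧ Y.card = n ∧
    ∀ Z : Finset E3, (↑Z : Set E3) ⊆ Qcube → Z.card = n → quantE Y ≤ quantE Z

/-- ω₃ = 4π/3, the volume of the unit ball in ℝ³. -/
def omega3 : ℝ := 4 * Real.pi / 3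

/-- Γ₁ = (2/5)^{2/3} / 40. -/
def Gamma1 : ℝ := ((2 / 5 : ℝ) ^ ((2 : ℝ) / 3)) / 40

/-- Γ₃ = ω₃^{-1/5} Γ₁^{1/5}. -/
def Gamma3 : ℝ := omega3 ^ (-(1 : ℝ) / 5) * Gamma1 ^ ((1 : ℝ) / 5)

/-- Γ₅ = (1/4)(√(1 + 2⁴·3³/(5²·10³)) − 1) Γ₃. -/
def Gamma5 : ℝ :=
  (1 / 4) * (Real.sqrt (1 + (2 ^ 4 * 3 ^ 3 : ℝ) / (5 ^ 2 * 10 ^ 3)) - 1) * Gamma3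

/-- Γ₄, the diameter upper-bound constant. -/
def Gamma4 : ℝ :=
  (2 * (12 : ℝ) ^ ((1 : ℝ) / 4) * (16 : ℝ) ^ ((1 : ℝ) / 3) /
      (Real.pi ^ ((1 : ℝ) / 4) * omega3 ^ ((1 : ℝ) / 12))) *
    (Real.sqrt (1 + (2 ^ 4 * 3 ^ 3 : ℝ) / (5 ^ 2 * 10 ^ 3)) - 1) ^ (-(1 : ℝ) / 2) *
    ((5 ^ 2 * 10 ^ 3 : ℝ) / (2 ^ 2 * 3 ^ 3)) ^ ((1 : ℝ) / 4)

/-!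
Chebyshev's inequality: the points of Q within distance r of Y lie in n balls of volume ω₃ r³, so
E(Y) ≥ r² (1 − n ω₃ r³). With R the radius of a ball of volume 1/n, the claimed constant equals
(3/10) R², and r = (4/5) R gives E(Y) ≥ (16/25)(61/125) R² ≥ (3/10) R².
-/

open MeasureTheory Metric Set Real

lemma Qcube_eq_preimage_Icc : Qcube = WithLp.ofLp ⁻¹' Icc (0 : Fin 3 → ℝ) 1 := by
  ext x
  simp [Qcube, Pi.le_def, forall_and]

lemma isCompact_Qcube : IsCompact Qcube := by
  rw [Qcube_eq_preimage_Icc]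
  exact (PiLp.homeomorph 2 _).isCompact_preimage.2 isCompact_Icc

lemma volume_Qcube : volume Qcube = 1 := by
  rw [Qcube_eq_preimage_Icc]
  refine ((EuclideanSpace.volume_preserving_symm_measurableEquiv_toLp (Fin 3)).measure_preimage
    measurableSet_Icc.nullMeasurableSet).trans ?_
  simp [Real.volume_Icc_pi]

section Chebyshev

variable {α : Type*} [PseudoMetricSpace α] [MeasurableSpace α] {μ : Measure α} [IsFiniteMeasure μ]
  {Y : Finset α}

lemma measureReal_univ_sub_sum_ball_le (hY : Y.Nonempty) (r : ℝ) :
    μ.real univ - ∑ y ∈ Y, μ.real (ball y r) ≤ μ.real {x | r ≤ infDist x (Y : Set α)} := by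
  have hcover : univ ⊆ {x | r ≤ infDist x (Y : Set α)} ∪ ⋃ y ∈ Y, ball y r := by
    intro x _
    by_cases hx : r ≤ infDist x (Y : Set α)
    · exact Or.inl hx
    · obtain ⟨y, hy, hxy⟩ := (infDist_lt_iff (Finset.coe_nonempty.2 hY)).1 (not_le.1 hx)
      exact Or.inr (mem_biUnion hy hxy)
  rw [sub_le_iff_le_add]
  calc μ.real univ ≤ μ.real {x | r ≤ infDist x (Y : Set α)} + μ.real (⋃ y ∈ Y, ball y r) :=
        (measureReal_mono hcover).trans (measureReal_union_le _ _)
    _ ≤ μ.real {x | r ≤ infDist x (Y : Set α)} + ∑ y ∈ Y, μ.real (ball y r) := by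
        gcongr
        exact measureReal_biUnion_finset_le _ _

lemma sq_mul_sub_sum_ball_le_integral_infDist_sq (hY : Y.Nonempty) {r : ℝ} (hr : 0 ≤ r)
    (hint : Integrable (fun x => infDist x (Y : Set α) ^ 2) μ) :
    r ^ 2 * (μ.real univ - ∑ y ∈ Y, μ.real (ball y r)) ≤ ∫ x, infDist x (Y : Set α) ^ 2 ∂μ :=
  calc r ^ 2 * (μ.real univ - ∑ y ∈ Y, μ.real (ball y r))
      ≤ r ^ 2 * μ.real {x | r ^ 2 ≤ infDist x (Y : Set α) ^ 2} := by
        gcongr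
        refine (measureReal_univ_sub_sum_ball_le hY r).trans (measureReal_mono ?_)
        exact fun x hx => pow_le_pow_left₀ hr hx 2
    _ ≤ ∫ x, infDist x (Y : Set α) ^ 2 ∂μ :=
        mul_meas_ge_le_integral_of_nonneg (ae_of_all _ fun _ => sq_nonneg _) hint _

end Chebyshev

lemma measureReal_restrict_Qcube_ball_le (y : E3) {r : ℝ} (hr : 0 ≤ r) :
    (volume.restrict Qcube).real (ball y r) ≤ omega3 * r ^ 3 := by
  rw [measureReal_restrict_apply measurableSet_ball]
  refine (measureReal_mono inter_subset_left).trans_eq ?_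
  rw [measureReal_def, EuclideanSpace.volume_ball_fin_three, ENNReal.toReal_mul,
    ENNReal.toReal_pow, ENNReal.toReal_ofReal hr, ENNReal.toReal_ofReal (by positivity), omega3]
  ring

lemma sq_mul_one_sub_le_quantE {Y : Finset E3} (hY : Y.Nonempty) {r : ℝ} (hr : 0 ≤ r) :
    r ^ 2 * (1 - Y.card * (omega3 * r ^ 3)) ≤ quantE Y := by
  have : IsFiniteMeasure (volume.restrict Qcube) := by
    rw [isFiniteMeasure_restrict, volume_Qcube]
    exact ENNReal.one_ne_top
  have hint : IntegrableOn (fun x => infDist x (Y : Set E3) ^ 2) Qcube :=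
    ((continuous_infDist_pt _).pow 2).continuousOn.integrableOn_compact isCompact_Qcube
  refine le_trans ?_ (sq_mul_sub_sum_ball_le_integral_infDist_sq hY hr hint)
  have hQ : (volume.restrict Qcube).real univ = 1 := by
    rw [measureReal_restrict_apply_univ, measureReal_def, volume_Qcube, ENNReal.toReal_one]
  have hballs : ∑ y ∈ Y, (volume.restrict Qcube).real (ball y r) ≤ Y.card * (omega3 * r ^ 3) := by
    rw [← nsmul_eq_mul]
    exact Finset.sum_le_card_nsmul _ _ _ fun y _ => measureReal_restrict_Qcube_ball_le y hr
  rw [hQ]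
  exact mul_le_mul_of_nonneg_left (sub_le_sub_left hballs 1) (sq_nonneg r)

theorem stmt_9_general (n : ℕ) (hn : 1 ≤ n) (Y : Finset E3)
    (hcard : Y.card = n) :
    quantE Y ≥ (2 * Real.pi / 5) * ((3 : ℝ) / (4 * Real.pi)) ^ ((5 : ℝ) / 3) *
      (n : ℝ) ^ (-(2 : ℝ) / 3) := by
  have hY : Y.Nonempty := Finset.card_pos.1 (hcard ▸ hn)
  have hn0 : (0 : ℝ) < n := by exact_mod_cast hn
  set a : ℝ := 3 / (4 * π) with ha_def
  have ha : 0 < a := by positivity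
  set R : ℝ := (a / n) ^ ((3 : ℕ) : ℝ)⁻¹
  have hvol : n * (omega3 * R ^ 3) = 1 := by
    rw [Real.rpow_inv_natCast_pow (by positivity) three_ne_zero, omega3, ha_def]
    field_simp
  have hrhs : 2 * π / 5 * a ^ ((5 : ℝ) / 3) * (n : ℝ) ^ (-(2 : ℝ) / 3) = 3 / 10 * R ^ 2 := by
    have hR2 : R ^ 2 = a ^ ((2 : ℝ) / 3) / (n : ℝ) ^ ((2 : ℝ) / 3) := by
      rw [← Real.rpow_mul_natCast (by positivity), ← Real.div_rpow ha.le hn0.le]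
      norm_num
    have ha53 : a ^ ((5 : ℝ) / 3) = a * a ^ ((2 : ℝ) / 3) := by
      rw [← Real.rpow_one_add' ha.le (by norm_num)]
      norm_num
    rw [hR2, ha53, neg_div, Real.rpow_neg hn0.le, ha_def]
    field_simp
    ring
  have hr : n * (omega3 * (4 / 5 * R) ^ 3) = 64 / 125 := by linear_combination 64 / 125 * hvol
  calc 2 * π / 5 * a ^ ((5 : ℝ) / 3) * (n : ℝ) ^ (-(2 : ℝ) / 3) = 3 / 10 * R ^ 2 := hrhs
    _ ≤ (4 / 5 * R) ^ 2 * (1 - n * (omega3 * (4 / 5 * R) ^ 3)) := by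
        rw [hr]; nlinarith [sq_nonneg R]
    _ ≤ quantE Y := hcard ▸ sq_mul_one_sub_le_quantE hY (by positivity)

theorem stmt_9 (n : ℕ) (hn : 1 ≤ n) (Y : Finset E3)
    (hYQ : (↑Y : Set E3) ⊆ Qcube) (hcard : Y.card = n) :
    quantE Y ≥ (2 * Real.pi / 5) * ((3 : ℝ) / (4 * Real.pi)) ^ ((5 : ℝ) / 3) *
      (n : ℝ) ^ (-(2 : ℝ) / 3) :=
  stmt_9_general n hn Y hcard
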